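/- arXiv:math/0610335 — 6 statements merged into one kernel-verified Lean document; each statement's English description precedes it below -/
import Mathlib

section
/- For any complex numbers a, b with a, b, a+b not integers, Γ(a)Γ(1-a-b)/Γ(1-b) + Γ(b)Γ(1-a-b)/Γ(1-a) + Γ(a)Γ(b)/Γ(a+b) = √π · (Γ((1-a-b)/2)/Γ((a+b)/2)) · (Γ(a/2)/Γ((1-a)/2)) · (Γ(b/2)/Γ((1-b)/2)). -/
/-!
By Euler's reflection formula each term on the left is `Γ(a) Γ(b) Γ(c) sin(π x) / π` with
`c = 1 - a - b` and `x ∈ {a, b, c}`, while reflection and Legendre duplication turn each quotient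
on the right into `Γ(x) 2^(1-x) cos(π x / 2) / √π`. Since `a + b + c = 1`, both sides reduce to the
elementary identity `sin(πa) + sin(πb) + sin(πc) = 4 cos(πa/2) cos(πb/2) cos(πc/2)`.
-/

open Complex Real

namespace Complex

theorem sin_two_mul_add_sin_two_mul_add_sin_two_mul {x y z : ℂ} (h : x + y + z = π / 2) :
    sin (2 * x) + sin (2 * y) + sin (2 * z) = 4 * cos x * cos y * cos z := by
  obtain rfl : z = π / 2 - (x + y) := by linear_combination h
  rw [cos_pi_div_two_sub, show 2 * (π / 2 - (x + y)) = π - 2 * (x + y) by ring, sin_pi_sub,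
    two_mul (x + y), sin_add (x + y), sin_add x y, cos_add x y, sin_two_mul, sin_two_mul]
  linear_combination -2 * sin x * cos x * sin_sq_add_cos_sq y
    - 2 * sin y * cos y * sin_sq_add_cos_sq x

theorem inv_Gamma_one_sub {z : ℂ} (hz : ∀ m : ℕ, z ≠ -m) :
    (Gamma (1 - z))⁻¹ = Gamma z * sin (π * z) / π := by
  rw [← div_mul_cancel_left₀ (Gamma_ne_zero hz), Gamma_mul_Gamma_one_sub, div_div_eq_mul_div]

theorem Gamma_half_div_Gamma_one_sub_half {z : ℂ} (hz : ∀ m : ℕ, z ≠ -(2 * m + 1)) :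
    Gamma (z / 2) / Gamma ((1 - z) / 2) = Gamma z * 2 ^ (1 - z) * cos (π * z / 2) * √π / π := by
  have hz' : ∀ m : ℕ, (1 + z) / 2 ≠ -m := fun m hm => hz m (by linear_combination 2 * hm)
  have hdup := Gamma_mul_Gamma_add_half (z / 2)
  rw [show z / 2 + 1 / 2 = (1 + z) / 2 by ring, show 2 * (z / 2) = z by ring] at hdup
  have hsin : sin (π * ((1 + z) / 2)) = cos (π * z / 2) := by
    rw [show π * ((1 + z) / 2) = π / 2 - -(π * z / 2) by ring, sin_pi_div_two_sub, cos_neg]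
  rw [div_eq_mul_inv, show (1 - z) / 2 = 1 - (1 + z) / 2 by ring, inv_Gamma_one_sub hz', hsin,
    mul_div_assoc', ← mul_assoc, hdup]
  ring

end Complex

theorem gamma_identity_plus (a b : ℂ) (ha : ∀ n : ℤ, a ≠ n) (hb : ∀ n : ℤ, b ≠ n)
    (hab : ∀ n : ℤ, a + b ≠ n) :
    Complex.Gamma a * Complex.Gamma (1 - a - b) / Complex.Gamma (1 - b)
      + Complex.Gamma b * Complex.Gamma (1 - a - b) / Complex.Gamma (1 - a)
      + Complex.Gamma a * Complex.Gamma b / Complex.Gamma (a + b)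
    = (Real.sqrt Real.pi : ℂ)
      * (Complex.Gamma ((1 - a - b) / 2) / Complex.Gamma ((a + b) / 2))
      * (Complex.Gamma (a / 2) / Complex.Gamma ((1 - a) / 2))
      * (Complex.Gamma (b / 2) / Complex.Gamma ((1 - b) / 2)) := by
  set c := 1 - a - b with hc
  have hc_int : ∀ n : ℤ, c ≠ n := fun n h => hab (1 - n) (by push_cast; linear_combination -h)
  have hnat {x : ℂ} (hx : ∀ n : ℤ, x ≠ n) (m : ℕ) : x ≠ -m := by exact_mod_cast hx (-m)
  have hodd {x : ℂ} (hx : ∀ n : ℤ, x ≠ n) (m : ℕ) : x ≠ -(2 * m + 1) := by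
    exact_mod_cast hx (-(2 * m + 1))
  have hpow : (2 : ℂ) ^ (1 - c) * 2 ^ (1 - a) * 2 ^ (1 - b) = 4 := by
    rw [← cpow_add _ _ two_ne_zero, ← cpow_add _ _ two_ne_zero,
      show 1 - c + (1 - a) + (1 - b) = (2 : ℕ) by push_cast; linear_combination -hc, cpow_natCast]
    norm_num
  have hsqrt : (√π : ℂ) ^ 2 = π := by norm_cast; exact sq_sqrt pi_pos.le
  have htrig : sin (π * a) + sin (π * b) + sin (π * c)
      = 4 * cos (π * a / 2) * cos (π * b / 2) * cos (π * c / 2) := by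
    have := sin_two_mul_add_sin_two_mul_add_sin_two_mul
      (x := π * a / 2) (y := π * b / 2) (z := π * c / 2) (by linear_combination π / 2 * hc)
    simpa only [mul_div_cancel₀ _ (two_ne_zero' ℂ)] using this
  rw [show a + b = 1 - c by linear_combination hc, div_eq_mul_inv _ (Gamma (1 - b)),
    div_eq_mul_inv _ (Gamma (1 - a)), div_eq_mul_inv _ (Gamma (1 - c)),
    inv_Gamma_one_sub (hnat ha), inv_Gamma_one_sub (hnat hb), inv_Gamma_one_sub (hnat hc_int),
    Gamma_half_div_Gamma_one_sub_half (hodd ha), Gamma_half_div_Gamma_one_sub_half (hodd hb),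
    Gamma_half_div_Gamma_one_sub_half (hodd hc_int)]
  field_simp
  rw [show (√π : ℂ) ^ 4 = ((√π : ℂ) ^ 2) ^ 2 by ring, hsqrt]
  linear_combination Gamma a * Gamma b * Gamma c * π ^ 2 * htrig
    - Gamma a * Gamma b * Gamma c * π ^ 2 * cos (π * a / 2) * cos (π * b / 2) * cos (π * c / 2)
      * hpow
end

section
/- Let q be a prime and s, λ complex numbers with Re(s) > 1 and Re(s − λ) > 1. Then ∑_{n ≥ 1, q | n} σ_λ(n) n^{−s} = ζ(s) ζ(s − λ) q^{−s} ( σ_λ(q) − q^{−(s−λ)} ), where the sum runs over positive multiples of q. -/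
/-! Write `σ_λ = 1 ⍟ n^λ`. The sum over multiples of `q` is `L(σ_λ)` minus the L-series of
`σ_λ` restricted to `n` prime to `q`; since `q` is prime, that restriction is the convolution
of the restrictions of `1` and `n^λ`, whose L-series are `(1 - q^{-s}) ζ(s)` and
`(1 - q^{λ-s}) ζ(s-λ)`. Expanding `ζ(s) ζ(s-λ) (1 - (1 - q^{-s}) (1 - q^{λ-s}))` gives the
formula. -/

open Complex Finset

open scoped LSeries.notation

def offMultiples {R : Type*} [Zero R] (q : ℕ) (f : ℕ → R) : ℕ → R :=
  fun n => if q ∣ n then 0 else f n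

lemma offMultiples_convolution {R : Type*} [Semiring R] {q : ℕ} (hq : q.Prime)
    (f g : ℕ → R) : offMultiples q (f ⍟ g) = offMultiples q f ⍟ offMultiples q g := by
  ext n
  simp only [offMultiples, LSeries.convolution_def]
  split_ifs with hqn
  · refine (Finset.sum_eq_zero fun x hx => ?_).symm
    rw [Nat.mem_divisorsAntidiagonal] at hx
    rcases hq.dvd_mul.mp (hx.1 ▸ hqn) with h | h <;> simp [h]
  · refine Finset.sum_congr rfl fun x hx => ?_
    rw [Nat.mem_divisorsAntidiagonal] at hx
    have hx₁ : ¬ q ∣ x.1 := fun h => hqn (hx.1 ▸ h.mul_right _)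
    have hx₂ : ¬ q ∣ x.2 := fun h => hqn (hx.1 ▸ h.mul_left _)
    simp [hx₁, hx₂]

lemma LSeriesSummable.offMultiples {f : ℕ → ℂ} {s : ℂ} (hf : LSeriesSummable f s)
    (q : ℕ) : LSeriesSummable (offMultiples q f) s :=
  Summable.of_norm_bounded hf.norm fun n =>
    LSeries.norm_term_le s <| by unfold _root_.offMultiples; split_ifs <;> simp

lemma hasSum_term_multiples {f : ℕ → ℂ} {s : ℂ} {q : ℕ} (hq : q ≠ 0)
    (hf : LSeriesSummable f s) :
    HasSum (fun k : ℕ => f (q * (k + 1)) * ((q * (k + 1) : ℕ) : ℂ) ^ (-s))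
      (LSeries f s - LSeries (offMultiples q f) s) := by
  have hsum := hf.LSeriesHasSum.sub (hf.offMultiples q).LSeriesHasSum
  have hinj : Function.Injective fun k : ℕ => q * (k + 1) := fun a b hab => by
    simpa [Nat.mul_left_cancel_iff (Nat.pos_of_ne_zero hq)] using hab
  refine (hinj.hasSum_iff fun n hn => ?_).mpr hsum |>.congr_fun fun k => ?_
  · rcases eq_or_ne n 0 with rfl | hn₀
    · simp
    have hqn : ¬ q ∣ n := by
      rintro ⟨m, rfl⟩
      exact hn ⟨m - 1,
        congrArg (q * ·) (Nat.succ_pred_eq_of_ne_zero (right_ne_zero_of_mul hn₀))⟩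
    simp [LSeries.term_of_ne_zero hn₀, offMultiples, hqn]
  · have hk : q * (k + 1) ≠ 0 := by positivity
    simp [LSeries.term_of_ne_zero hk, offMultiples, cpow_neg, div_eq_mul_inv]

lemma one_convolution {R : Type*} [Semiring R] (f : ℕ → R) :
    1 ⍟ f = fun n => ∑ d ∈ n.divisors, f d := by
  ext n
  simp only [LSeries.convolution_def, Pi.one_apply, one_mul]
  exact Nat.sum_divisorsAntidiagonal' fun _ b => f b

lemma LSeriesHasSum_natCast_cpow {a s : ℂ} (h : 1 < (s - a).re) :
    LSeriesHasSum (fun n : ℕ => (n : ℂ) ^ a) s (riemannZeta (s - a)) := by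
  have hterm : LSeries.term (fun n : ℕ => (n : ℂ) ^ a) s = LSeries.term 1 (s - a) := by
    ext n
    rcases eq_or_ne n 0 with rfl | hn
    · simp
    rw [LSeries.term_of_ne_zero hn, LSeries.term_of_ne_zero hn,
      cpow_sub _ _ (by exact_mod_cast hn), Pi.one_apply, one_div_div]
  rw [LSeriesHasSum, hterm]
  exact LSeriesHasSum_one h

lemma LSeries_offMultiples_natCast_cpow {a s : ℂ} {q : ℕ} (hq : q ≠ 0) (h : 1 < (s - a).re) :
    LSeries (offMultiples q fun n : ℕ => (n : ℂ) ^ a) s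
      = (1 - (q : ℂ) ^ (-(s - a))) * riemannZeta (s - a) := by
  have hpow := LSeriesHasSum_natCast_cpow h
  have hmul : ∀ k : ℕ, ((q * (k + 1) : ℕ) : ℂ) ^ a * ((q * (k + 1) : ℕ) : ℂ) ^ (-s)
      = (q : ℂ) ^ (-(s - a)) * (1 / ((k : ℂ) + 1) ^ (s - a)) := by
    intro k
    rw [← cpow_add _ _ (by exact_mod_cast (by positivity : q * (k + 1) ≠ 0)), Nat.cast_mul,
      natCast_mul_natCast_cpow]
    push_cast
    rw [one_div, ← cpow_neg]
    ring_nf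
  have hmultiples := (hasSum_term_multiples hq hpow.LSeriesSummable).tsum_eq
  rw [tsum_congr hmul, tsum_mul_left, ← zeta_eq_tsum_one_div_nat_add_one_cpow h,
    hpow.LSeries_eq] at hmultiples
  linear_combination hmultiples

theorem divisor_sum_multiples_of_prime (q : ℕ) (hq : q.Prime) (s lam : ℂ)
    (hs : 1 < s.re) (hsl : 1 < (s - lam).re) :
    ∑' k : ℕ, (∑ d ∈ (q * (k + 1)).divisors, (d : ℂ) ^ lam) * ((q * (k + 1) : ℕ) : ℂ) ^ (-s)
    = riemannZeta s * riemannZeta (s - lam) * (q : ℂ) ^ (-s)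
      * ((∑ d ∈ q.divisors, (d : ℂ) ^ lam) - (q : ℂ) ^ (-(s - lam))) := by
  have hq₀ := hq.ne_zero
  have hone : (fun n : ℕ => (n : ℂ) ^ (0 : ℂ)) = 1 := funext fun _ => cpow_zero _
  have hs₀ : 1 < (s - 0).re := by rwa [sub_zero]
  have hζ := LSeriesHasSum_natCast_cpow hs₀
  have hζoff := LSeries_offMultiples_natCast_cpow hq₀ hs₀
  rw [hone, sub_zero] at hζ hζoff
  have hpow := LSeriesHasSum_natCast_cpow hsl
  have hσ := hζ.LSeriesSummable.convolution hpow.LSeriesSummable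
  rw [one_convolution] at hσ
  rw [(hasSum_term_multiples hq₀ hσ).tsum_eq, ← one_convolution, offMultiples_convolution hq,
    LSeries_convolution' hζ.LSeriesSummable hpow.LSeriesSummable,
    LSeries_convolution' (hζ.LSeriesSummable.offMultiples q)
      (hpow.LSeriesSummable.offMultiples q),
    hζ.LSeries_eq, hpow.LSeries_eq, hζoff, LSeries_offMultiples_natCast_cpow hq₀ hsl]
  have hσq : ∑ d ∈ q.divisors, (d : ℂ) ^ lam = 1 + (q : ℂ) ^ lam := by
    rw [hq.sum_divisors, Nat.cast_one, one_cpow, add_comm]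
  have hqpow : (q : ℂ) ^ (-(s - lam)) = (q : ℂ) ^ (-s) * (q : ℂ) ^ lam := by
    rw [neg_sub, cpow_sub _ _ (by exact_mod_cast hq₀), cpow_neg, div_eq_inv_mul]
  rw [hσq, hqpow]
  ring
end

section
/- For every complex α with Re(α) < 0 and every positive integer n, σ_α(n) = ζ(1 − α) · ∑_{l ≥ 1} c_l(n) / l^{1−α}, where c_l(n) = ∑_{d | gcd(l,n)} d · μ(l/d) is the Ramanujan sum and the series converges absolutely. -/
open Complex Finset

/-- The Ramanujan sum `c_l(n) = ∑_{d | gcd(l,n)} d · μ(l/d)`, as a complex number. -/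
noncomputable def ramanujanSum (l n : ℕ) : ℂ :=
  ∑ d ∈ (Nat.gcd l n).divisors, (d : ℂ) * (ArithmeticFunction.moebius (l / d) : ℂ)

open ArithmeticFunction in
private lemma rs_zero (n : ℕ) : ramanujanSum 0 n = 0 := by
  simp [ramanujanSum]

open ArithmeticFunction in
private lemma rs_abs_le (l n : ℕ) (hn : 0 < n) :
    ‖ramanujanSum l n‖ ≤ ∑ d ∈ n.divisors, (d : ℝ) := by
  calc ‖ramanujanSum l n‖
      ≤ ∑ d ∈ (Nat.gcd l n).divisors,
          ‖(d : ℂ) * (moebius (l / d) : ℂ)‖ := norm_sum_le _ _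
    _ ≤ ∑ d ∈ (Nat.gcd l n).divisors, (d : ℝ) := by
        refine Finset.sum_le_sum fun d _ => ?_
        rw [norm_mul, Complex.norm_natCast]
        have h1 : ‖((moebius (l / d) : ℤ) : ℂ)‖ ≤ 1 := by
          rw [Complex.norm_intCast]
          exact_mod_cast abs_moebius_le_one
        exact mul_le_of_le_one_right (by positivity) h1
    _ ≤ ∑ d ∈ n.divisors, (d : ℝ) :=
        Finset.sum_le_sum_of_subset_of_nonneg
          (Nat.divisors_subset_of_dvd hn.ne' (Nat.gcd_dvd_right l n))
          (fun d _ _ => by positivity)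

open ArithmeticFunction in
private lemma rs_eq (l n : ℕ) (hn : 0 < n) (s : ℂ) :
    ramanujanSum l n / (l : ℂ) ^ s
      = ∑ d ∈ n.divisors,
          (if d ∣ l then (d : ℂ) * (moebius (l / d) : ℂ) / (l : ℂ) ^ s else 0) := by
  rcases Nat.eq_zero_or_pos l with rfl | hl
  · simp [rs_zero, Nat.zero_div]
  · have hg : (Nat.gcd l n).divisors = n.divisors.filter (· ∣ l) := by
      ext d
      simp only [Nat.mem_divisors, Finset.mem_filter]
      constructor
      · rintro ⟨hd, _⟩
        exact ⟨⟨hd.trans (Nat.gcd_dvd_right l n), hn.ne'⟩, hd.trans (Nat.gcd_dvd_left l n)⟩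
      · rintro ⟨⟨hdn, _⟩, hdl⟩
        exact ⟨Nat.dvd_gcd hdl hdn, Nat.gcd_ne_zero_left hl.ne'⟩
    rw [ramanujanSum, hg, Finset.sum_filter, Finset.sum_div]
    refine Finset.sum_congr rfl fun d _ => ?_
    split_ifs <;> simp

open ArithmeticFunction in
theorem sigma_eq_zeta_mul_ramanujan_series (α : ℂ) (hα : α.re < 0) (n : ℕ) (hn : 0 < n) :
    Summable (fun l : ℕ => ramanujanSum (l + 1) n / ((l + 1 : ℕ) : ℂ) ^ ((1 : ℂ) - α)) ∧
    Summable (fun l : ℕ =>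
      ‖ramanujanSum (l + 1) n / ((l + 1 : ℕ) : ℂ) ^ ((1 : ℂ) - α)‖) ∧
    ∑ d ∈ n.divisors, (d : ℂ) ^ α
      = riemannZeta (1 - α)
        * ∑' l : ℕ, ramanujanSum (l + 1) n / ((l + 1 : ℕ) : ℂ) ^ ((1 : ℂ) - α) := by
  set s : ℂ := 1 - α with hsdef
  have hs : 1 < s.re := by
    simp only [hsdef, Complex.sub_re, Complex.one_re]
    linarith
  have hsre0 : 0 < s.re := by linarith
  set C : ℝ := ∑ d ∈ n.divisors, (d : ℝ) with hCdef
  set F : ℕ → ℂ := fun l => ramanujanSum l n / (l : ℂ) ^ s with hFdef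
  set G : ℕ → ℕ → ℂ :=
    fun d l => if d ∣ l then (d : ℂ) * (moebius (l / d) : ℂ) / (l : ℂ) ^ s else 0 with hGdef
  -- Summability of the majorant
  have hmaj : Summable (fun l : ℕ => 1 / (l : ℝ) ^ s.re) :=
    Real.summable_one_div_nat_rpow.mpr hs
  have habs_cpow : ∀ l : ℕ, 0 < l → ‖(l : ℂ) ^ s‖ = (l : ℝ) ^ s.re := by
    intro l hl
    rw [show ((l : ℕ) : ℂ) = (((l : ℝ)) : ℂ) by push_cast; ring,
      Complex.norm_cpow_eq_rpow_re_of_pos (by exact_mod_cast hl)]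
  -- Bound on each G d
  have habsG : ∀ d l : ℕ, ‖G d l‖ ≤ (d : ℝ) * (1 / (l : ℝ) ^ s.re) := by
    intro d l
    rcases Nat.eq_zero_or_pos l with rfl | hl
    · simp [hGdef, Nat.zero_div, Real.zero_rpow hsre0.ne']
    · by_cases hdl : d ∣ l
      · simp only [hGdef, hdl, if_true]
        rw [norm_div, norm_mul, Complex.norm_natCast, habs_cpow l hl]
        have h1 : ‖((moebius (l / d) : ℤ) : ℂ)‖ ≤ 1 := by
          rw [Complex.norm_intCast]
          exact_mod_cast abs_moebius_le_one
        rw [div_eq_mul_inv, mul_assoc, mul_one_div, div_eq_mul_inv]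
        have h2 : ‖((moebius (l / d) : ℤ) : ℂ)‖ * ((l : ℝ) ^ s.re)⁻¹
            ≤ 1 * ((l : ℝ) ^ s.re)⁻¹ := by
          gcongr
        refine le_trans (mul_le_mul_of_nonneg_left h2 (by positivity)) ?_
        rw [one_mul]
      · simp only [hGdef, hdl, if_false]
        rw [norm_zero]
        positivity
  have hGsummable : ∀ d : ℕ, Summable (G d) := by
    intro d
    refine Summable.of_norm_bounded (hmaj.mul_left (d : ℝ)) ?_
    intro l
    exact habsG d l
  -- F decomposes as finite sum of G d
  have hFeq : ∀ l : ℕ, F l = ∑ d ∈ n.divisors, G d l := fun l => rs_eq l n hn s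
  have hFsummable : Summable F := by
    rw [show F = fun l => ∑ d ∈ n.divisors, G d l from funext hFeq]
    exact summable_sum fun d _ => hGsummable d
  have hshift : Summable (fun l : ℕ => F (l + 1)) :=
    (summable_nat_add_iff 1).mpr hFsummable
  have hF0 : F 0 = 0 := by simp [hFdef, rs_zero]
  refine ⟨hshift, ?_, ?_⟩
  · rw [show (fun l : ℕ => ‖ramanujanSum (l + 1) n / ((l + 1 : ℕ) : ℂ) ^ s‖)
        = fun l : ℕ => ‖F (l + 1)‖ from rfl]
    refine summable_norm_iff.mpr hshift
  · -- main identity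
    have hLμ : LSeries (fun k => ((moebius k : ℤ) : ℂ)) s = (riemannZeta s)⁻¹ := by
      have h1 := LSeries_zeta_mul_Lseries_moebius (s := s) hs
      rw [LSeries_zeta_eq_riemannZeta hs] at h1
      exact eq_inv_of_mul_eq_one_right h1
    have hGd : ∀ d ∈ n.divisors,
        ∑' l : ℕ, G d l = (d : ℂ) ^ ((1 : ℂ) - s) * (riemannZeta s)⁻¹ := by
      intro d hd
      have hd0 : 0 < d := Nat.pos_of_mem_divisors hd
      have hinj : Function.Injective (fun m : ℕ => d * m) :=
        fun a b h => Nat.eq_of_mul_eq_mul_left hd0 h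
      have hrange : Function.support (G d) ⊆ Set.range (fun m : ℕ => d * m) := by
        intro x hx
        by_contra hxr
        apply hx
        have hndvd : ¬ d ∣ x := by
          intro ⟨c, hc⟩
          exact hxr ⟨c, hc.symm⟩
        simp [hGdef, hndvd]
      have hre : ∑' m : ℕ, G d (d * m) = ∑' l : ℕ, G d l :=
        Function.Injective.tsum_eq hinj hrange
      have hterm : ∀ m : ℕ, G d (d * m)
          = (d : ℂ) ^ ((1 : ℂ) - s) * LSeries.term (fun k => ((moebius k : ℤ) : ℂ)) s m := by
        intro m
        have hdvd : d ∣ d * m := Dvd.intro m rfl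
        have hdiv : d * m / d = m := Nat.mul_div_cancel_left m hd0
        simp only [hGdef, hdvd, if_true, hdiv]
        have hmul : ((d * m : ℕ) : ℂ) ^ s = (d : ℂ) ^ s * (m : ℂ) ^ s := by
          rw [show ((d * m : ℕ) : ℂ) = (((d : ℝ)) : ℂ) * (((m : ℝ)) : ℂ) by push_cast; ring]
          rw [mul_cpow_ofReal_nonneg d.cast_nonneg m.cast_nonneg]
          norm_cast
        rw [hmul]
        rcases Nat.eq_zero_or_pos m with rfl | hm
        · simp [LSeries.term_zero]
        · rw [LSeries.term_of_ne_zero hm.ne']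
          have hdC : ((d : ℂ)) ≠ 0 := Nat.cast_ne_zero.mpr hd0.ne'
          conv_rhs => rw [Complex.cpow_sub _ _ hdC, Complex.cpow_one, div_mul_div_comm]
      rw [← hre]
      rw [show (fun m => G d (d * m))
          = fun m => (d : ℂ) ^ ((1 : ℂ) - s)
              * LSeries.term (fun k => ((moebius k : ℤ) : ℂ)) s m from funext hterm]
      rw [tsum_mul_left, ← hLμ]
      rfl
    have hT : ∑' l : ℕ, F (l + 1) = ∑' l : ℕ, F l := by
      rw [Summable.tsum_eq_zero_add hFsummable, hF0, zero_add]
    have htot : ∑' l : ℕ, F l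
        = (∑ d ∈ n.divisors, (d : ℂ) ^ ((1 : ℂ) - s)) * (riemannZeta s)⁻¹ := by
      rw [show F = fun l => ∑ d ∈ n.divisors, G d l from funext hFeq]
      rw [Summable.tsum_finsetSum fun d _ => hGsummable d]
      rw [Finset.sum_congr rfl hGd, ← Finset.sum_mul]
    have hα' : (1 : ℂ) - s = α := by rw [hsdef]; ring
    have hζ0 : riemannZeta s ≠ 0 := riemannZeta_ne_zero_of_one_lt_re hs
    calc ∑ d ∈ n.divisors, (d : ℂ) ^ α
        = riemannZeta s * ((∑ d ∈ n.divisors, (d : ℂ) ^ ((1 : ℂ) - s))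
            * (riemannZeta s)⁻¹) := by
          rw [hα', mul_comm (riemannZeta s), mul_assoc, inv_mul_cancel₀ hζ0, mul_one]
      _ = riemannZeta s * ∑' l : ℕ, F l := by rw [htot]
      _ = riemannZeta s * ∑' l : ℕ, F (l + 1) := by rw [hT]
end

section
/- Let q be an odd prime and x, y, z ∈ ℤ/qℤ, and define T(x,y,z;q) = ∑*_{a} ∑*_{b} ∑*_{c} e( (c(a^{-1} − b^{-1}) + ax + by + cz)/q ), where the starred sums run over invertible residues mod q and a^{-1} denotes the inverse of a mod q. If z = 0, then T(x,y,0;q) = q·c_q(x+y) − c_q(x)·c_q(y), where c_q is the Ramanujan sum modulo q. -/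
open Complex Finset

/-- `e(t/q)` for a residue `t` mod `q`. -/
noncomputable def eZMod (q : ℕ) [NeZero q] (t : ZMod q) : ℂ :=
  Complex.exp (2 * Real.pi * Complex.I * (t.val : ℂ) / (q : ℂ))

/-- The triple exponential sum `T(x,y,z;q)`. -/
noncomputable def tripleSum (q : ℕ) [NeZero q] (x y z : ZMod q) : ℂ :=
  ∑ a : (ZMod q)ˣ, ∑ b : (ZMod q)ˣ, ∑ c : (ZMod q)ˣ,
    eZMod q ((c : ZMod q) * ((a⁻¹ : (ZMod q)ˣ) - (b⁻¹ : (ZMod q)ˣ))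
      + (a : ZMod q) * x + (b : ZMod q) * y + (c : ZMod q) * z)

/-- The Ramanujan sum mod `q` for prime `q`, as a function of a residue. -/
noncomputable def cq (q : ℕ) (u : ZMod q) : ℂ := if u = 0 then (q : ℂ) - 1 else -1

lemma eZMod_eq_stdAddChar (q : ℕ) [NeZero q] (t : ZMod q) :
    eZMod q t = ZMod.stdAddChar t := by
  rw [ZMod.stdAddChar_apply, ZMod.toCircle_apply]
  push_cast [eZMod]
  ring_nf

lemma eZMod_add (q : ℕ) [NeZero q] (s t : ZMod q) :
    eZMod q (s + t) = eZMod q s * eZMod q t := by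
  simp [eZMod_eq_stdAddChar, AddChar.map_add_eq_mul]

lemma sum_units_eZMod (q : ℕ) [NeZero q] (hq : q.Prime) (u : ZMod q) :
    ∑ a : (ZMod q)ˣ, eZMod q ((a : ZMod q) * u) = cq q u := by
  haveI : Fact q.Prime := ⟨hq⟩
  simp only [eZMod_eq_stdAddChar]
  by_cases hu : u = 0
  · simp [hu, cq, ZMod.card_units_eq_totient, Nat.totient_prime hq, Nat.cast_sub hq.one_lt.le]
  · have hψ : (ZMod.stdAddChar (N := q)) ≠ 0 := by
      intro h
      have h1 : ZMod.stdAddChar (1 : ZMod q) = 1 := by rw [h]; simp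
      rw [ZMod.stdAddChar_apply, ← (ZMod.stdAddChar (N := q)).map_zero_eq_one,
        ZMod.stdAddChar_apply] at h1
      have := ZMod.injective_toCircle (N := q) (Subtype.coe_injective h1)
      exact one_ne_zero this
    have h0 : ∑ t : ZMod q, ZMod.stdAddChar t = 0 :=
      (AddChar.sum_eq_zero_iff_ne_zero).2 hψ
    -- reindex a ↦ a * v where ↑v = u
    obtain ⟨v, hv⟩ := isUnit_iff_ne_zero.mpr hu
    have hre : ∑ a : (ZMod q)ˣ, ZMod.stdAddChar ((a : ZMod q) * u)
        = ∑ a : (ZMod q)ˣ, ZMod.stdAddChar (a : ZMod q) := by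
      refine Fintype.sum_equiv (Equiv.mulRight v) _ _ fun a => ?_
      simp [hv]
    rw [hre]
    have hsplit : ∑ t : ZMod q, ZMod.stdAddChar t
        = ZMod.stdAddChar 0 + ∑ t ∈ univ.erase (0 : ZMod q), ZMod.stdAddChar t :=
      (Finset.add_sum_erase _ _ (mem_univ 0)).symm
    have hunits : ∑ a : (ZMod q)ˣ, ZMod.stdAddChar (a : ZMod q)
        = ∑ t ∈ univ.erase (0 : ZMod q), ZMod.stdAddChar t := by
      refine Finset.sum_bij (fun (a : (ZMod q)ˣ) _ => (a : ZMod q)) ?_ ?_ ?_ ?_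
      · intro a _; simp [Units.ne_zero]
      · intro a _ b _ h; exact Units.ext h
      · intro t ht
        exact ⟨(isUnit_iff_ne_zero.mpr (Finset.mem_erase.mp ht).1).unit, mem_univ _,
          ((isUnit_iff_ne_zero.mpr (Finset.mem_erase.mp ht).1).unit_spec).symm⟩
      · intro a _; rfl
    rw [hunits]
    have : (0 : ℂ) = ZMod.stdAddChar (0 : ZMod q)
        + ∑ t ∈ univ.erase (0 : ZMod q), ZMod.stdAddChar t := by
      rw [← hsplit, h0]
    simp only [AddChar.map_zero_eq_one] at this
    rw [cq, if_neg hu]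
    linear_combination -this

set_option maxRecDepth 8000
set_option maxHeartbeats 1000000

theorem tripleSum_z_eq_zero (q : ℕ) [NeZero q] (hq : q.Prime) (hodd : Odd q)
    (x y : ZMod q) :
    tripleSum q x y 0 = (q : ℂ) * cq q (x + y) - cq q x * cq q y := by
  haveI : Fact q.Prime := ⟨hq⟩
  unfold tripleSum
  have step1 : ∀ a b : (ZMod q)ˣ,
      (∑ c : (ZMod q)ˣ, eZMod q ((c : ZMod q) * ((a⁻¹ : (ZMod q)ˣ) - (b⁻¹ : (ZMod q)ˣ))
        + (a : ZMod q) * x + (b : ZMod q) * y + (c : ZMod q) * 0))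
      = cq q ((a⁻¹ : (ZMod q)ˣ) - ((b⁻¹ : (ZMod q)ˣ) : ZMod q))
        * (eZMod q ((a : ZMod q) * x) * eZMod q ((b : ZMod q) * y)) := by
    intro a b
    simp only [mul_zero, add_zero, add_assoc, eZMod_add]
    rw [← Finset.sum_mul, sum_units_eZMod q hq]
  simp only [step1]
  have hcq : ∀ a b : (ZMod q)ˣ,
      cq q ((a⁻¹ : (ZMod q)ˣ) - ((b⁻¹ : (ZMod q)ˣ) : ZMod q))
      = (if a = b then (q : ℂ) else 0) - 1 := by
    intro a b
    rw [cq]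
    by_cases h : a = b
    · subst h; rw [sub_self, if_pos rfl, if_pos rfl]
    · rw [if_neg (sub_ne_zero.mpr fun hc => h (inv_injective (Units.ext hc))), if_neg h]
      ring
  rw [show (∑ a : (ZMod q)ˣ, ∑ b : (ZMod q)ˣ,
      cq q ((a⁻¹ : (ZMod q)ˣ) - ((b⁻¹ : (ZMod q)ˣ) : ZMod q))
        * (eZMod q ((a : ZMod q) * x) * eZMod q ((b : ZMod q) * y)))
      = ∑ a : (ZMod q)ˣ, ∑ b : (ZMod q)ˣ, ((if a = b then (q : ℂ) else 0) - 1)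
        * (eZMod q ((a : ZMod q) * x) * eZMod q ((b : ZMod q) * y)) from
    Finset.sum_congr rfl fun a _ => Finset.sum_congr rfl fun b _ => by rw [hcq]]
  simp only [sub_mul, one_mul]
  simp only [Finset.sum_sub_distrib]
  congr 1
  · simp only [ite_mul, zero_mul, Finset.sum_ite_eq, mem_univ, if_true]
    rw [← Finset.mul_sum]
    congr 1
    have : ∀ a : (ZMod q)ˣ, eZMod q ((a : ZMod q) * x) * eZMod q ((a : ZMod q) * y)
        = eZMod q ((a : ZMod q) * (x + y)) := by
      intro a; rw [mul_add, eZMod_add]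
    simp only [this]
    exact sum_units_eZMod q hq (x + y)
  · rw [← Finset.sum_mul_sum, sum_units_eZMod q hq, sum_units_eZMod q hq]
end

section
/- For complex b and x with 0 < Re(b) and x > 0, and any 0 < c < Re(b): (1 + x)^{−b} = (1/2πi) ∫_{(c)} (Γ(v)Γ(b−v)/Γ(b)) x^{−v} dv, where the integral is over the vertical line Re(v) = c. -/
/-!
The substitution `t = x / (1 - x)` turns the Mellin transform of `(1 + t)^(-b)` into the beta
integral `B(s, b - s) = Γ(s) Γ(b - s) / Γ(b)` for `0 < Re s < Re b`, so the formula is Mellin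
inversion on the line `Re s = c`. Integrability along that line comes from
`Γ(s + 2) = s (s + 1) Γ(s)`: the transform at `s` is `Γ(b + 2) / Γ(b)` times the transform of
`(1 + t)^(-(b + 2))` at `s + 2`, divided by `s (s + 1)`; the latter transform is bounded on
vertical lines, so the integrand decays like `|s|^(-2)`.
-/

open Complex MeasureTheory Set Filter Asymptotics

lemma image_div_one_sub_Ioo : (fun x : ℝ => x / (1 - x)) '' Ioo 0 1 = Ioi 0 := by
  ext y
  constructor
  · rintro ⟨x, ⟨hx0, hx1⟩, rfl⟩
    exact div_pos hx0 (sub_pos.mpr hx1)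
  · intro (hy : 0 < y)
    refine ⟨y / (1 + y), ⟨by positivity, (div_lt_one (by positivity)).mpr (by linarith)⟩, ?_⟩
    field_simp
    ring

lemma injOn_div_one_sub_Ioo : InjOn (fun x : ℝ => x / (1 - x)) (Ioo 0 1) := by
  rintro x ⟨-, hx⟩ y ⟨-, hy⟩ h
  have : (1 : ℝ) - x ≠ 0 := by linarith
  have : (1 : ℝ) - y ≠ 0 := by linarith
  field_simp at h
  linarith

lemma hasDerivAt_div_one_sub {x : ℝ} (hx : x ≠ 1) :
    HasDerivAt (fun x : ℝ => x / (1 - x)) ((1 - x) ^ 2)⁻¹ x :=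
  ((hasDerivAt_id' x).div ((hasDerivAt_id' x).const_sub 1) (sub_ne_zero.mpr hx.symm)).congr_deriv
    (by ring)

lemma abs_inv_sq_smul_cpow_div_one_sub {x : ℝ} (hx0 : 0 < x) (hx1 : x < 1) (s b : ℂ) :
    |((1 - x) ^ 2)⁻¹| • (((x / (1 - x) : ℝ) : ℂ) ^ (s - 1) • ((1 + x / (1 - x) : ℝ) : ℂ) ^ (-b))
      = (x : ℂ) ^ (s - 1) * (1 - (x : ℂ)) ^ (b - s - 1) := by
  have hy : 0 < 1 - x := sub_pos.mpr hx1
  set y := 1 - x with hy_def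
  have hy0 : (y : ℂ) ≠ 0 := ofReal_ne_zero.mpr hy.ne'
  have harg : (y : ℂ).arg ≠ Real.pi := by
    rw [arg_ofReal_of_nonneg hy.le]; exact Real.pi_ne_zero.symm
  have hinv : ∀ w : ℂ, ((y⁻¹ : ℝ) : ℂ) ^ w = (y : ℂ) ^ (-w) := fun w => by
    rw [ofReal_inv, inv_cpow _ _ harg, cpow_neg]
  have hsq : (((y ^ 2)⁻¹ : ℝ) : ℂ) = (y : ℂ) ^ (-2 : ℂ) := by
    rw [cpow_neg, cpow_ofNat]; push_cast; rfl
  have hone_add : 1 + x / y = y⁻¹ := by field_simp; ring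
  rw [hone_add, div_eq_mul_inv, ofReal_mul, mul_cpow_ofReal_nonneg hx0.le (inv_nonneg.mpr hy.le),
    hinv, hinv, abs_of_pos (by positivity), real_smul, smul_eq_mul, hsq, mul_left_comm,
    mul_assoc, ← cpow_add _ _ hy0, ← cpow_add _ _ hy0, hy_def, ofReal_sub, ofReal_one]
  ring_nf

lemma mellin_one_add_cpow_neg (b s : ℂ) :
    mellin (fun t : ℝ => ((1 + t : ℝ) : ℂ) ^ (-b)) s = betaIntegral s (b - s) := by
  rw [mellin, ← image_div_one_sub_Ioo, integral_image_eq_integral_abs_deriv_smul measurableSet_Ioo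
    (fun x hx => (hasDerivAt_div_one_sub hx.2.ne).hasDerivWithinAt) injOn_div_one_sub_Ioo,
    betaIntegral, intervalIntegral.integral_of_le zero_le_one, integral_Ioc_eq_integral_Ioo]
  exact setIntegral_congr_fun measurableSet_Ioo fun x hx =>
    abs_inv_sq_smul_cpow_div_one_sub hx.1 hx.2 s b

lemma mellin_one_add_cpow_neg_eq_Gamma {b s : ℂ} (hs : 0 < s.re) (hsb : s.re < b.re) :
    mellin (fun t : ℝ => ((1 + t : ℝ) : ℂ) ^ (-b)) s = Gamma s * Gamma (b - s) / Gamma b := by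
  rw [mellin_one_add_cpow_neg, betaIntegral_eq_Gamma_mul_div _ _ hs (by simpa using hsb),
    add_sub_cancel]

lemma continuousAt_one_add_cpow_neg (b : ℂ) {t : ℝ} (ht : -1 < t) :
    ContinuousAt (fun t : ℝ => ((1 + t : ℝ) : ℂ) ^ (-b)) t :=
  ContinuousAt.cpow (by fun_prop) continuousAt_const (Or.inl (by simp only [ofReal_re]; linarith))

lemma mellinConvergent_one_add_cpow_neg {b s : ℂ} (hs : 0 < s.re) (hsb : s.re < b.re) :
    MellinConvergent (fun t : ℝ => ((1 + t : ℝ) : ℂ) ^ (-b)) s := by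
  have hnorm : ∀ t : ℝ, 0 ≤ t → ‖((1 + t : ℝ) : ℂ) ^ (-b)‖ = (1 + t) ^ (-b.re) := fun t ht => by
    rw [norm_cpow_eq_rpow_re_of_pos (by linarith), neg_re]
  refine mellinConvergent_of_isBigO_rpow (a := b.re) (b := 0) ?_ ?_ hsb ?_ hs
  · exact ContinuousOn.locallyIntegrableOn (fun t (ht : 0 < t) =>
      (continuousAt_one_add_cpow_neg b (by linarith)).continuousWithinAt) measurableSet_Ioi
  · refine isBigO_iff.mpr ⟨1, eventually_atTop.mpr ⟨1, fun t ht => ?_⟩⟩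
    have ht0 : 0 ≤ t := by linarith
    rw [hnorm t ht0, one_mul, Real.norm_rpow_of_nonneg ht0, Real.norm_of_nonneg ht0]
    exact Real.rpow_le_rpow_of_nonpos (by linarith) (by linarith) (by linarith)
  · refine isBigO_iff.mpr ⟨1, eventually_nhdsWithin_of_forall fun t (ht : 0 < t) => ?_⟩
    rw [hnorm t ht.le, neg_zero, Real.rpow_zero, norm_one, one_mul]
    exact Real.rpow_le_one_of_one_le_of_nonpos (by linarith) (by linarith)

lemma norm_mellin_le {E : Type*} [NormedAddCommGroup E] [NormedSpace ℂ E] (f : ℝ → E) (s : ℂ) :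
    ‖mellin f s‖ ≤ ∫ t in Ioi 0, t ^ (s.re - 1) * ‖f t‖ := by
  refine (norm_integral_le_integral_norm _).trans_eq
    (setIntegral_congr_fun measurableSet_Ioi fun t (ht : 0 < t) => ?_)
  rw [norm_smul, norm_cpow_eq_rpow_re_of_pos ht, sub_re, one_re]

lemma Gamma_mul_Gamma_sub_div_eq {b s : ℂ} (hs : 0 < s.re) (hsb : s.re < b.re) :
    Gamma s * Gamma (b - s) / Gamma b
      = Gamma (b + 2) / Gamma b * mellin (fun t : ℝ => ((1 + t : ℝ) : ℂ) ^ (-(b + 2))) (s + 2)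
          / (s * (s + 1)) := by
  have hs0 : s ≠ 0 := fun h => by simp [h] at hs
  have hs1 : s + 1 ≠ 0 := fun h => by
    have := congrArg re h; simp only [add_re, one_re, zero_re] at this; linarith
  rw [mellin_one_add_cpow_neg_eq_Gamma (by simp only [add_re, re_ofNat]; linarith)
      (by simp only [add_re, re_ofNat]; linarith),
    show b + 2 - (s + 2) = b - s by ring, show s + 2 = s + 1 + 1 by ring,
    Gamma_add_one _ hs1, Gamma_add_one _ hs0]
  have := Gamma_ne_zero_of_re_pos (s := b + 2) (by simp only [add_re, re_ofNat]; linarith)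
  field_simp

lemma sq_norm_le_norm_mul_add_one {s : ℂ} (hs : 0 ≤ s.re) : ‖s‖ ^ 2 ≤ ‖s * (s + 1)‖ := by
  have : ‖s‖ ≤ ‖s + 1‖ := by
    rw [← sq_le_sq₀ (norm_nonneg _) (norm_nonneg _), Complex.sq_norm, Complex.sq_norm, normSq_apply,
      normSq_apply]
    simp only [add_re, one_re, add_im, one_im, add_zero]
    nlinarith
  rw [norm_mul, sq]
  exact mul_le_mul_of_nonneg_left this (norm_nonneg _)

lemma norm_Gamma_mul_Gamma_sub_div_le {b : ℂ} {c : ℝ} (hc0 : 0 < c) (hcb : c < b.re) :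
    ∃ C, ∀ s : ℂ, s.re = c → ‖Gamma s * Gamma (b - s) / Gamma b‖ ≤ C / ‖s‖ ^ 2 := by
  set K := ∫ t in Ioi 0, t ^ (c + 1) * ‖((1 + t : ℝ) : ℂ) ^ (-(b + 2))‖
  have hK : 0 ≤ K := setIntegral_nonneg measurableSet_Ioi fun t (ht : 0 < t) => by positivity
  refine ⟨‖Gamma (b + 2) / Gamma b‖ * K, fun s hs => ?_⟩
  have hmellin : ‖mellin (fun t : ℝ => ((1 + t : ℝ) : ℂ) ^ (-(b + 2))) (s + 2)‖ ≤ K := by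
    refine (norm_mellin_le _ _).trans_eq ?_
    rw [add_re, hs, re_ofNat, show c + 2 - 1 = c + 1 by ring]
  rw [Gamma_mul_Gamma_sub_div_eq (hs ▸ hc0) (hs ▸ hcb), norm_div, norm_mul]
  have hs0 : 0 < ‖s‖ := norm_pos_iff.mpr fun h => by simp [h] at hs; linarith
  exact div_le_div₀ (by positivity) (mul_le_mul_of_nonneg_left hmellin (norm_nonneg _))
    (by positivity) (sq_norm_le_norm_mul_add_one (hs ▸ hc0.le))

lemma integrable_inv_sq_add_sq {c : ℝ} (hc : c ≠ 0) :
    Integrable fun τ : ℝ => (c ^ 2 + τ ^ 2)⁻¹ := by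
  refine ((integrable_inv_one_add_sq.comp_div hc).const_mul (c ^ 2)⁻¹).congr
    (Eventually.of_forall fun τ => ?_)
  field_simp

lemma verticalIntegrable_of_norm_le_div_sq {E : Type*} [NormedAddCommGroup E] {f : ℂ → E} {c : ℝ}
    (hc : c ≠ 0) (hf : Continuous fun τ : ℝ => f (c + τ * I)) {C : ℝ}
    (hC : ∀ s : ℂ, s.re = c → ‖f s‖ ≤ C / ‖s‖ ^ 2) : VerticalIntegrable f c := by
  refine ((integrable_inv_sq_add_sq hc).const_mul C).mono' hf.aestronglyMeasurable
    (Eventually.of_forall fun τ => ?_)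
  have := hC (c + τ * I) (by simp)
  rwa [Complex.sq_norm, normSq_add_mul_I, div_eq_mul_inv] at this

lemma continuousAt_Gamma_of_re_pos {s : ℂ} (hs : 0 < s.re) : ContinuousAt Gamma s :=
  continuousAt_Gamma s fun m h => by
    simp only [h, neg_re, natCast_re, Left.neg_pos_iff] at hs
    exact (Nat.cast_nonneg m).not_gt hs

lemma verticalIntegrable_Gamma_mul_Gamma_sub_div {b : ℂ} {c : ℝ} (hc0 : 0 < c) (hcb : c < b.re) :
    VerticalIntegrable (fun s => Gamma s * Gamma (b - s) / Gamma b) c := by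
  obtain ⟨C, hC⟩ := norm_Gamma_mul_Gamma_sub_div_le hc0 hcb
  refine verticalIntegrable_of_norm_le_div_sq hc0.ne'
    (continuous_iff_continuousAt.mpr fun τ => ?_) hC
  refine ((ContinuousAt.comp (continuousAt_Gamma_of_re_pos ?_) (by fun_prop)).mul
    (ContinuousAt.comp (continuousAt_Gamma_of_re_pos ?_) (by fun_prop))).div_const _
  · simpa using hc0
  · simpa using hcb

theorem mellin_barnes_one_add_pow_general (b : ℂ) (x : ℝ) (hx : 0 < x)
    (c : ℝ) (hc0 : 0 < c) (hcb : c < b.re) :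
    ((1 + x : ℝ) : ℂ) ^ (-b)
    = (1 / (2 * Real.pi)) *
        ∫ t : ℝ, (Complex.Gamma (c + t * Complex.I) * Complex.Gamma (b - (c + t * Complex.I))
            / Complex.Gamma b) * (x : ℂ) ^ (-(c + t * Complex.I)) := by
  set f : ℝ → ℂ := fun t => ((1 + t : ℝ) : ℂ) ^ (-b)
  have hmellin (τ : ℝ) : mellin f (c + τ * I)
      = Gamma (c + τ * I) * Gamma (b - (c + τ * I)) / Gamma b :=
    mellin_one_add_cpow_neg_eq_Gamma (by simpa using hc0) (by simpa using hcb)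
  have hvert : VerticalIntegrable (mellin f) c :=
    (verticalIntegrable_Gamma_mul_Gamma_sub_div hc0 hcb).congr
      (Eventually.of_forall fun τ => (hmellin τ).symm)
  refine (mellinInv_mellin_eq c f hx (mellinConvergent_one_add_cpow_neg (by simpa using hc0)
    (by simpa using hcb)) hvert (continuousAt_one_add_cpow_neg b (by linarith))).symm.trans ?_
  simp only [mellinInv, hmellin, smul_eq_mul, real_smul]
  congr 1
  · push_cast; ring
  · exact integral_congr_ae (Eventually.of_forall fun τ => by ring)

theorem mellin_barnes_one_add_pow (b : ℂ) (hb : 0 < b.re) (x : ℝ) (hx : 0 < x)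
    (c : ℝ) (hc0 : 0 < c) (hcb : c < b.re) :
    ((1 + x : ℝ) : ℂ) ^ (-b)
    = (1 / (2 * Real.pi)) *
        ∫ t : ℝ, (Complex.Gamma (c + t * Complex.I) * Complex.Gamma (b - (c + t * Complex.I))
            / Complex.Gamma b) * (x : ℂ) ^ (-(c + t * Complex.I)) :=
  mellin_barnes_one_add_pow_general b x hx c hc0 hcb
end

section
/- For real r > 0 and complex s with 0 < Re(s), one has 2 ∫_0^∞ K_{2ir}(x) x^{s} dx/x = 2^{s−1} Γ((s+2ir)/2) Γ((s−2ir)/2), where K_ν is the modified Bessel function of the second kind. -/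
open Complex MeasureTheory

/-- The modified Bessel function of the second kind `K_ν(x)` for `x > 0`, defined by its
standard integral representation `K_ν(x) = ∫_0^∞ exp(-x cosh t) cosh(ν t) dt`. -/
noncomputable def besselK (ν : ℂ) (x : ℝ) : ℂ :=
  ∫ t in Set.Ioi (0 : ℝ), Complex.exp (-(x : ℂ) * Real.cosh t) * Complex.cosh (ν * t)


namespace MellinBesselKAux

open Set

set_option maxHeartbeats 1000000

lemma cpow_eq_exp {y : ℝ} (hy : 0 < y) (w : ℂ) :
    (y : ℂ) ^ w = Complex.exp (w * Real.log y) := by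
  rw [Complex.cpow_def_of_ne_zero (by exact_mod_cast hy.ne'), ← Complex.ofReal_log hy.le,
    mul_comm]

lemma norm_cpow_real {y : ℝ} (hy : 0 < y) (w : ℂ) :
    ‖(y : ℂ) ^ w‖ = y ^ w.re := by
  rw [Complex.norm_cpow_eq_rpow_re_of_pos hy]

lemma exp_le_two_cosh (t : ℝ) : Real.exp t ≤ 2 * Real.cosh t := by
  rw [Real.cosh_eq]
  nlinarith [Real.exp_pos (-t)]

lemma cosh_rpow_le {σ : ℝ} (hσ : 0 < σ) {t : ℝ} (ht : 0 ≤ t) :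
    Real.cosh t ^ (-σ) ≤ 2 ^ σ * Real.exp (-(σ * t)) := by
  calc Real.cosh t ^ (-σ) ≤ (Real.exp t / 2) ^ (-σ) := by
        apply Real.rpow_le_rpow_of_nonpos (by positivity) _ (neg_nonpos.mpr hσ.le)
        linarith [exp_le_two_cosh t]
    _ = 2 ^ σ * Real.exp (-(σ * t)) := by
        rw [Real.div_rpow (Real.exp_pos t).le (by norm_num), Real.rpow_neg (Real.exp_pos t).le,
          Real.rpow_neg (by norm_num : (0:ℝ) ≤ 2), ← Real.exp_mul, mul_comm t σ, Real.exp_neg]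
        field_simp

lemma integrable_cosh_rpow {σ : ℝ} (hσ : 0 < σ) :
    Integrable (fun t : ℝ => Real.cosh t ^ (-σ)) := by
  have meas : AEStronglyMeasurable (fun t : ℝ => Real.cosh t ^ (-σ)) volume :=
    (Real.continuous_cosh.rpow_const fun t => Or.inl (Real.cosh_pos t).ne').aestronglyMeasurable
  have key : IntegrableOn (fun t : ℝ => Real.cosh t ^ (-σ)) (Ici 0) := by
    rw [integrableOn_Ici_iff_integrableOn_Ioi]
    apply Integrable.mono' ((exp_neg_integrableOn_Ioi 0 hσ).const_mul (2 ^ σ))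
      meas.restrict
    filter_upwards [ae_restrict_mem measurableSet_Ioi] with t ht
    rw [Real.norm_eq_abs, _root_.abs_of_nonneg (Real.rpow_nonneg (Real.cosh_pos t).le _)]
    simpa [neg_mul] using cosh_rpow_le hσ (le_of_lt ht)
  have h2 : IntegrableOn (fun t : ℝ => Real.cosh t ^ (-σ)) (Iio 0) := by
    rw [← (Measure.measurePreserving_neg (volume : Measure ℝ)).integrableOn_comp_preimage
      (Homeomorph.neg ℝ).measurableEmbedding]
    simp only [Function.comp_def, Real.cosh_neg, neg_preimage, neg_Iio, neg_zero]
    exact key.mono_set Ioi_subset_Ici_self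
  rw [← integrableOn_univ, ← Iio_union_Ici (a := (0:ℝ)), integrableOn_union]
  exact ⟨h2, key⟩

lemma norm_cosh_I (r t : ℝ) : ‖Complex.cosh (2 * Complex.I * r * t)‖ ≤ 1 := by
  have h : (2 * Complex.I * r * t : ℂ) = ((2 * r * t : ℝ) : ℂ) * Complex.I := by
    push_cast; ring
  rw [h, Complex.cosh_mul_I, ← Complex.ofReal_cos, Complex.norm_real, Real.norm_eq_abs]
  exact Real.abs_cos_le_one _

lemma norm_exp_I (r t : ℝ) : ‖Complex.exp (2 * Complex.I * r * t)‖ = 1 := by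
  rw [Complex.norm_exp]
  simp


noncomputable def phi (t : ℝ) : ℝ := (1 + Real.sinh t / Real.cosh t) / 2

lemma phi_hasDeriv (t : ℝ) : HasDerivAt phi ((2 * Real.cosh t ^ 2)⁻¹) t := by
  have h : HasDerivAt (fun t => Real.sinh t / Real.cosh t)
      ((Real.cosh t * Real.cosh t - Real.sinh t * Real.sinh t) / Real.cosh t ^ 2) t :=
    (Real.hasDerivAt_sinh t).div (Real.hasDerivAt_cosh t) (Real.cosh_pos t).ne'
  have h2 := (h.const_add 1).div_const 2
  refine h2.congr_deriv ?_
  have := Real.cosh_sq_sub_sinh_sq t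
  rw [show Real.cosh t * Real.cosh t - Real.sinh t * Real.sinh t = 1 by nlinarith [this]]
  ring

lemma phi_eq (t : ℝ) : phi t = Real.exp t / (2 * Real.cosh t) := by
  have hC := Real.cosh_pos t
  rw [phi, ← Real.cosh_add_sinh]
  field_simp

lemma one_sub_phi (t : ℝ) : 1 - phi t = Real.exp (-t) / (2 * Real.cosh t) := by
  have hC := Real.cosh_pos t
  rw [phi, ← Real.cosh_sub_sinh]
  field_simp
  nlinarith [Real.cosh_eq t, Real.cosh_pos t]

lemma phi_pos (t : ℝ) : 0 < phi t := by
  rw [phi_eq]; positivity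

lemma phi_lt_one (t : ℝ) : phi t < 1 := by
  have h := one_sub_phi t
  have : 0 < Real.exp (-t) / (2 * Real.cosh t) := by positivity
  linarith

lemma phi_exp (t : ℝ) : phi t = Real.exp (2 * t) / (Real.exp (2 * t) + 1) := by
  have hC := Real.cosh_pos t
  have h2 : Real.exp (2 * t) = Real.exp t * Real.exp t := by
    rw [← Real.exp_add]; ring_nf
  have hn : Real.exp (-t) = (Real.exp t)⁻¹ := Real.exp_neg t
  rw [phi_eq, Real.cosh_eq, h2, hn]
  have he := Real.exp_pos t
  field_simp

lemma phi_image : phi '' univ = Ioo (0 : ℝ) 1 := by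
  apply Subset.antisymm
  · rintro _ ⟨t, -, rfl⟩
    exact ⟨phi_pos t, phi_lt_one t⟩
  · rintro y ⟨hy0, hy1⟩
    refine ⟨Real.log (y / (1 - y)) / 2, mem_univ _, ?_⟩
    have h1 : 0 < y / (1 - y) := div_pos hy0 (by linarith)
    rw [phi_exp]
    rw [show 2 * (Real.log (y / (1 - y)) / 2) = Real.log (y / (1 - y)) by ring,
      Real.exp_log h1]
    have : (1 : ℝ) - y ≠ 0 := by linarith
    field_simp
    ring

lemma phi_strictMono : StrictMono phi :=
  strictMono_of_deriv_pos fun t => by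
    rw [(phi_hasDeriv t).deriv]; positivity


lemma pointwise (s ν : ℂ) (t : ℝ) :
    |(2 * Real.cosh t ^ 2)⁻¹| • (((phi t : ℝ) : ℂ) ^ ((s + ν) / 2 - 1)
        * (1 - ((phi t : ℝ) : ℂ)) ^ ((s - ν) / 2 - 1))
      = 2 ^ ((1 : ℂ) - s) * (Complex.exp (ν * t) * ((1 / Real.cosh t : ℝ) : ℂ) ^ s) := by
  have hC := Real.cosh_pos t
  have h2C : (0:ℝ) < 2 * Real.cosh t := by positivity
  set L2 := Real.log 2 with hL2
  set LC := Real.log (Real.cosh t) with hLC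
  have hlog2C : Real.log (2 * Real.cosh t) = L2 + LC := Real.log_mul two_ne_zero hC.ne'
  have hA : ((phi t : ℝ) : ℂ) ^ ((s + ν) / 2 - 1)
      = Complex.exp (((s + ν) / 2 - 1) * ((t : ℂ) - (L2 + LC))) := by
    rw [cpow_eq_exp (phi_pos t), phi_eq, Real.log_div (Real.exp_ne_zero t) h2C.ne',
      Real.log_exp, hlog2C]
    push_cast
    ring_nf
  have hB : (1 - ((phi t : ℝ) : ℂ)) ^ ((s - ν) / 2 - 1)
      = Complex.exp (((s - ν) / 2 - 1) * (-(t : ℂ) - (L2 + LC))) := by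
    rw [show (1 - ((phi t : ℝ) : ℂ)) = (((1 - phi t : ℝ)) : ℂ) by push_cast; ring,
      cpow_eq_exp (by have := phi_lt_one t; linarith), one_sub_phi,
      Real.log_div (Real.exp_ne_zero (-t)) h2C.ne', Real.log_exp, hlog2C]
    push_cast
    ring_nf
  have hCpow : ((1 / Real.cosh t : ℝ) : ℂ) ^ s = Complex.exp (s * (-(LC : ℂ))) := by
    rw [cpow_eq_exp (by positivity), one_div, Real.log_inv]
    push_cast
    ring_nf
    rw [hLC]
  have hD : (2 : ℂ) ^ ((1 : ℂ) - s) = Complex.exp (((1 : ℂ) - s) * (L2 : ℂ)) := by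
    rw [show (2 : ℂ) = ((2 : ℝ) : ℂ) by norm_num, cpow_eq_exp two_pos, hL2]
  have hE : (((2 * Real.cosh t ^ 2)⁻¹ : ℝ) : ℂ)
      = Complex.exp ((-(L2 + 2 * LC) : ℝ) : ℂ) := by
    rw [← Complex.ofReal_exp]
    congr 1
    rw [Real.exp_neg, Real.exp_add, Real.exp_log two_pos, hLC,
      show (2 : ℝ) * Real.log (Real.cosh t) = Real.log (Real.cosh t ^ 2) by
        rw [Real.log_pow]; push_cast; ring,
      Real.exp_log (by positivity)]
  rw [_root_.abs_of_pos (by positivity : (0:ℝ) < (2 * Real.cosh t ^ 2)⁻¹), Complex.real_smul,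
    hA, hB, hCpow, hD, hE, ← Complex.exp_add, ← Complex.exp_add, ← Complex.exp_add,
    ← Complex.exp_add]
  congr 1
  push_cast
  ring


lemma continuous_h (s : ℂ) : Continuous (fun t : ℝ => ((1 / Real.cosh t : ℝ) : ℂ) ^ s) := by
  refine Continuous.cpow ?_ continuous_const fun t => ?_
  · exact Complex.continuous_ofReal.comp
      (continuous_const.div Real.continuous_cosh fun x => (Real.cosh_pos x).ne')
  · exact Complex.ofReal_mem_slitPlane.2 (by positivity)

lemma continuousOn_cpow (s : ℂ) :
    ContinuousOn (fun x : ℝ => (x : ℂ) ^ (s - 1)) (Ioi 0) := by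
  intro x hx
  have h1 : ContinuousAt (fun z : ℂ => z ^ (s - 1)) ((x : ℝ) : ℂ) :=
    continuousAt_cpow_const (Complex.ofReal_mem_slitPlane.2 hx)
  exact (h1.comp Complex.continuous_ofReal.continuousAt).continuousWithinAt

noncomputable def kern (s ν : ℂ) (t x : ℝ) : ℂ :=
  Complex.cosh (ν * t) * ((x : ℂ) ^ (s - 1) * Complex.exp (-(x : ℂ) * Real.cosh t))

lemma kern_norm (s ν : ℂ) (t : ℝ) {x : ℝ} (hx : 0 < x) :
    ‖kern s ν t x‖ = ‖Complex.cosh (ν * t)‖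
      * (x ^ (s.re - 1) * Real.exp (-(Real.cosh t * x))) := by
  rw [kern, show -(x : ℂ) * Real.cosh t = ((-(Real.cosh t * x) : ℝ) : ℂ) by push_cast; ring,
    norm_mul, norm_mul, norm_cpow_real hx, ← Complex.ofReal_exp, Complex.norm_real,
    Real.norm_eq_abs, abs_of_pos (Real.exp_pos _), Complex.sub_re, Complex.one_re]

lemma kern_slice {s : ℂ} (hs : 0 < s.re) (ν : ℂ) (t : ℝ) :
    IntegrableOn (fun x : ℝ => kern s ν t x) (Ioi 0) := by
  have hb := Real.cosh_pos t
  have hint : IntegrableOn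
      (fun x : ℝ => x ^ (s.re - 1) * Real.exp (-(Real.cosh t * x))) (Ioi 0) := by
    have := integrableOn_rpow_mul_exp_neg_mul_rpow (s := s.re - 1) (p := 1)
      (by linarith) zero_lt_one hb
    simpa [Real.rpow_one, neg_mul] using this
  have hbase : IntegrableOn
      (fun x : ℝ => (x : ℂ) ^ (s - 1) * Complex.exp (-(x : ℂ) * Real.cosh t)) (Ioi 0) := by
    apply Integrable.mono' hint
    · refine ContinuousOn.aestronglyMeasurable ?_ measurableSet_Ioi
      exact (continuousOn_cpow s).mul
        (Complex.continuous_exp.comp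
          ((Complex.continuous_ofReal.neg).mul continuous_const)).continuousOn
    · filter_upwards [ae_restrict_mem measurableSet_Ioi] with x hx
      rw [show -(x : ℂ) * Real.cosh t = ((-(Real.cosh t * x) : ℝ) : ℂ) by push_cast; ring,
        norm_mul, norm_cpow_real hx, ← Complex.ofReal_exp, Complex.norm_real,
        Real.norm_eq_abs, abs_of_pos (Real.exp_pos _), Complex.sub_re, Complex.one_re]
  exact hbase.const_mul _

lemma kern_int_norm {s : ℂ} (hs : 0 < s.re) (ν : ℂ) (t : ℝ) :
    (∫ x in Ioi (0:ℝ), ‖kern s ν t x‖)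
      = ‖Complex.cosh (ν * t)‖ * ((1 / Real.cosh t) ^ s.re * Real.Gamma s.re) := by
  rw [setIntegral_congr_fun measurableSet_Ioi (fun x hx => kern_norm s ν t hx),
    MeasureTheory.integral_const_mul,
    Real.integral_rpow_mul_exp_neg_mul_Ioi hs (Real.cosh_pos t)]

lemma kern_prod_integrable {s : ℂ} (hs : 0 < s.re) {ν : ℂ}
    (hν : ∀ t : ℝ, ‖Complex.cosh (ν * t)‖ ≤ 1) :
    Integrable (fun p : ℝ × ℝ => kern s ν p.1 p.2)
      ((volume.restrict (Ioi 0)).prod (volume.restrict (Ioi 0))) := by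
  have hmeas : AEStronglyMeasurable (fun p : ℝ × ℝ => kern s ν p.1 p.2)
      ((volume.restrict (Ioi (0:ℝ))).prod (volume.restrict (Ioi (0:ℝ)))) := by
    rw [Measure.prod_restrict]
    apply ContinuousOn.aestronglyMeasurable ?_ (measurableSet_Ioi.prod measurableSet_Ioi)
    apply ContinuousOn.mul
    · exact (Complex.continuous_cosh.comp
        (continuous_const.mul (Complex.continuous_ofReal.comp continuous_fst))).continuousOn
    · apply ContinuousOn.mul
      · exact (continuousOn_cpow s).comp continuous_snd.continuousOn fun p hp => hp.2
      · exact (Complex.continuous_exp.comp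
          (((Complex.continuous_ofReal.comp continuous_snd).neg).mul
            (Complex.continuous_ofReal.comp
              (Real.continuous_cosh.comp continuous_fst)))).continuousOn
  rw [MeasureTheory.integrable_prod_iff hmeas]
  constructor
  · exact Filter.Eventually.of_forall fun t => kern_slice hs ν t
  · have hint2 : Integrable
        (fun t : ℝ => ‖Complex.cosh (ν * t)‖ * ((1 / Real.cosh t) ^ s.re * Real.Gamma s.re))
        (volume.restrict (Ioi 0)) := by
      apply Integrable.restrict (μ := volume)
      apply Integrable.mono' ((integrable_cosh_rpow hs).const_mul (Real.Gamma s.re))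
      · apply Continuous.aestronglyMeasurable
        apply Continuous.mul
        · exact (Complex.continuous_cosh.comp
            (continuous_const.mul Complex.continuous_ofReal)).norm
        · exact ((continuous_const.div Real.continuous_cosh
            fun x => (Real.cosh_pos x).ne').rpow_const
              fun x => Or.inl (one_div_ne_zero (Real.cosh_pos x).ne')).mul continuous_const
      · refine Filter.Eventually.of_forall fun t => ?_
        have hC := Real.cosh_pos t
        have heq : (1 / Real.cosh t) ^ s.re = Real.cosh t ^ (-s.re) := by
          rw [one_div, Real.inv_rpow hC.le, ← Real.rpow_neg hC.le]
        have hΓ : (0:ℝ) ≤ Real.Gamma s.re := Real.Gamma_nonneg_of_nonneg hs.le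
        rw [Real.norm_eq_abs, _root_.abs_of_nonneg (by positivity)]
        calc ‖Complex.cosh (ν * t)‖ * ((1 / Real.cosh t) ^ s.re * Real.Gamma s.re)
            ≤ 1 * ((1 / Real.cosh t) ^ s.re * Real.Gamma s.re) :=
              mul_le_mul_of_nonneg_right (hν t) (by positivity)
          _ = Real.Gamma s.re * Real.cosh t ^ (-s.re) := by rw [one_mul, heq]; ring
    exact hint2.congr (Filter.Eventually.of_forall fun t => (kern_int_norm hs ν t).symm)

lemma kern_swap {s : ℂ} (hs : 0 < s.re) {ν : ℂ}
    (hν : ∀ t : ℝ, ‖Complex.cosh (ν * t)‖ ≤ 1) :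
    (∫ x in Ioi (0:ℝ), ∫ t in Ioi (0:ℝ), kern s ν t x)
      = ∫ t in Ioi (0:ℝ), ∫ x in Ioi (0:ℝ), kern s ν t x :=
  MeasureTheory.integral_integral_swap (f := fun x t => kern s ν t x)
    (kern_prod_integrable hs hν).swap

lemma kern_inner {s : ℂ} (hs : 0 < s.re) (ν : ℂ) (t : ℝ) :
    (∫ x in Ioi (0:ℝ), kern s ν t x)
      = Complex.cosh (ν * t) * ((1 / (Real.cosh t : ℂ)) ^ s * Complex.Gamma s) := by
  simp only [kern]
  rw [MeasureTheory.integral_const_mul]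
  congr 1
  rw [setIntegral_congr_fun (g := fun x : ℝ =>
      (x : ℂ) ^ (s - 1) * Complex.exp (-((Real.cosh t : ℂ) * x)))
    measurableSet_Ioi (fun x _ => by push_cast; ring_nf)]
  exact Complex.integral_cpow_mul_exp_neg_mul_Ioi hs (Real.cosh_pos t)


lemma beta_eq (s ν : ℂ) :
    Complex.betaIntegral ((s + ν) / 2) ((s - ν) / 2)
      = 2 ^ ((1 : ℂ) - s) * ∫ t : ℝ, Complex.exp (ν * t) * ((1 / Real.cosh t : ℝ) : ℂ) ^ s := by
  rw [Complex.betaIntegral, intervalIntegral.integral_of_le zero_le_one,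
    show (volume.restrict (Ioc (0:ℝ) 1)) = volume.restrict (Ioo (0:ℝ) 1) from
      (Measure.restrict_congr_set Ioo_ae_eq_Ioc).symm, ← phi_image,
    integral_image_eq_integral_abs_deriv_smul MeasurableSet.univ
      (fun t _ => (phi_hasDeriv t).hasDerivWithinAt) phi_strictMono.injective.injOn]
  rw [Measure.restrict_univ]
  simp only [pointwise s ν]
  rw [MeasureTheory.integral_const_mul]


lemma norm_exp_h {s μ : ℂ} (hμ : μ.re = 0) (t : ℝ) :
    ‖Complex.exp (μ * t) * ((1 / Real.cosh t : ℝ) : ℂ) ^ s‖ = Real.cosh t ^ (-s.re) := by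
  have hC := Real.cosh_pos t
  rw [norm_mul, norm_cpow_real (by positivity), Complex.norm_exp]
  have h1 : (μ * t).re = 0 := by
    rw [Complex.mul_re, Complex.ofReal_re, Complex.ofReal_im, hμ]
    ring
  rw [h1, Real.exp_zero, one_mul, one_div, Real.inv_rpow hC.le, ← Real.rpow_neg hC.le]

lemma integrable_exp_h {s μ : ℂ} (hs : 0 < s.re) (hμ : μ.re = 0) :
    Integrable (fun t : ℝ => Complex.exp (μ * t) * ((1 / Real.cosh t : ℝ) : ℂ) ^ s) := by
  apply Integrable.mono' (integrable_cosh_rpow hs)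
  · exact ((Complex.continuous_exp.comp
      (continuous_const.mul Complex.continuous_ofReal)).mul (continuous_h s)).aestronglyMeasurable
  · exact Filter.Eventually.of_forall fun t => le_of_eq (norm_exp_h hμ t)

lemma symmetrize {s ν : ℂ} (hs : 0 < s.re) (hν : ν.re = 0) :
    2 * ∫ t in Ioi (0:ℝ), Complex.cosh (ν * t) * ((1 / Real.cosh t : ℝ) : ℂ) ^ s
      = ∫ t : ℝ, Complex.exp (ν * t) * ((1 / Real.cosh t : ℝ) : ℂ) ^ s := by
  have h1 := integrable_exp_h hs hν
  have h2 := integrable_exp_h hs (show (-ν).re = 0 by simp [hν])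
  have key : ∀ z : ℂ, Complex.exp z + Complex.exp (-z) = 2 * Complex.cosh z := fun z => by
    rw [← Complex.cosh_add_sinh, ← Complex.cosh_sub_sinh]; ring
  calc 2 * ∫ t in Ioi (0:ℝ), Complex.cosh (ν * t) * ((1 / Real.cosh t : ℝ) : ℂ) ^ s
      = ∫ t in Ioi (0:ℝ), (Complex.exp (ν * t) * ((1 / Real.cosh t : ℝ) : ℂ) ^ s
          + Complex.exp (-ν * t) * ((1 / Real.cosh t : ℝ) : ℂ) ^ s) := by
        rw [← MeasureTheory.integral_const_mul]
        refine setIntegral_congr_fun measurableSet_Ioi fun t _ => ?_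
        have := key (ν * t)
        rw [show -ν * (t:ℂ) = -(ν * t) by ring]
        linear_combination -((1 / Real.cosh t : ℝ) : ℂ) ^ s * this
    _ = (∫ t in Ioi (0:ℝ), Complex.exp (ν * t) * ((1 / Real.cosh t : ℝ) : ℂ) ^ s)
          + ∫ t in Ioi (0:ℝ), Complex.exp (-ν * t) * ((1 / Real.cosh t : ℝ) : ℂ) ^ s :=
        MeasureTheory.integral_add h1.integrableOn h2.integrableOn
    _ = (∫ t in Iic (0:ℝ), Complex.exp (ν * t) * ((1 / Real.cosh t : ℝ) : ℂ) ^ s)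
          + ∫ t in Ioi (0:ℝ), Complex.exp (ν * t) * ((1 / Real.cosh t : ℝ) : ℂ) ^ s := by
        rw [add_comm]
        congr 1
        have hneg := integral_comp_neg_Ioi (c := 0)
          (f := fun t : ℝ => Complex.exp (ν * t) * ((1 / Real.cosh t : ℝ) : ℂ) ^ s)
        rw [neg_zero] at hneg
        rw [← hneg]
        refine setIntegral_congr_fun measurableSet_Ioi fun t _ => ?_
        rw [Real.cosh_neg]
        push_cast
        ring_nf
    _ = ∫ t : ℝ, Complex.exp (ν * t) * ((1 / Real.cosh t : ℝ) : ℂ) ^ s :=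
        intervalIntegral.integral_Iic_add_Ioi h1.integrableOn h1.integrableOn


end MellinBesselKAux

open MellinBesselKAux Set in
set_option maxHeartbeats 1000000 in
theorem mellin_besselK (r : ℝ) (hr : 0 < r) (s : ℂ) (hs : 0 < s.re) :
    2 * ∫ x in Set.Ioi (0 : ℝ), besselK (2 * Complex.I * r) x * (x : ℂ) ^ s / x
    = 2 ^ (s - 1) * Complex.Gamma ((s + 2 * Complex.I * r) / 2)
        * Complex.Gamma ((s - 2 * Complex.I * r) / 2) := by
  have hν1 : ∀ t : ℝ, ‖Complex.cosh ((2 * Complex.I * (r : ℂ)) * t)‖ ≤ 1 := fun t =>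
    norm_cosh_I r t
  have hνre : (2 * Complex.I * (r : ℂ)).re = 0 := by simp
  have step1 : (∫ x in Ioi (0:ℝ), besselK (2 * Complex.I * r) x * (x : ℂ) ^ s / x)
      = ∫ x in Ioi (0:ℝ), ∫ t in Ioi (0:ℝ), kern s (2 * Complex.I * r) t x := by
    refine setIntegral_congr_fun measurableSet_Ioi fun x hx => ?_
    have hx0 : (x : ℂ) ≠ 0 := Complex.ofReal_ne_zero.2 (ne_of_gt hx)
    rw [besselK, mul_div_assoc,
      show (x : ℂ) ^ s / x = (x : ℂ) ^ (s - 1) by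
        rw [Complex.cpow_sub _ _ hx0, Complex.cpow_one],
      ← MeasureTheory.integral_mul_const]
    refine setIntegral_congr_fun measurableSet_Ioi fun t _ => ?_
    rw [kern]; ring
  have step2 := kern_swap hs hν1
  have step3 : (∫ t in Ioi (0:ℝ), ∫ x in Ioi (0:ℝ), kern s (2 * Complex.I * r) t x)
      = ∫ t in Ioi (0:ℝ), Complex.Gamma s
          * (Complex.cosh ((2 * Complex.I * (r : ℂ)) * t) * ((1 / Real.cosh t : ℝ) : ℂ) ^ s) := by
    refine setIntegral_congr_fun measurableSet_Ioi fun t _ => ?_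
    rw [kern_inner hs _ t]
    push_cast
    ring
  rw [step1, step2, step3, MeasureTheory.integral_const_mul]
  rw [show (2 : ℂ) * (Complex.Gamma s * ∫ t in Ioi (0:ℝ),
        Complex.cosh ((2 * Complex.I * (r : ℂ)) * t) * ((1 / Real.cosh t : ℝ) : ℂ) ^ s)
      = Complex.Gamma s * (2 * ∫ t in Ioi (0:ℝ),
        Complex.cosh ((2 * Complex.I * (r : ℂ)) * t) * ((1 / Real.cosh t : ℝ) : ℂ) ^ s) by ring]
  rw [symmetrize hs hνre]
  have hJ : (∫ t : ℝ, Complex.exp ((2 * Complex.I * (r : ℂ)) * t) * ((1 / Real.cosh t : ℝ) : ℂ) ^ s)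
      = 2 ^ (s - 1) * Complex.betaIntegral ((s + 2 * Complex.I * r) / 2)
          ((s - 2 * Complex.I * r) / 2) := by
    rw [beta_eq s (2 * Complex.I * (r : ℂ)), ← mul_assoc,
      ← Complex.cpow_add _ _ (two_ne_zero), show s - 1 + (1 - s) = 0 by ring,
      Complex.cpow_zero, one_mul]
  rw [hJ]
  have ha : 0 < ((s + 2 * Complex.I * (r : ℂ)) / 2).re := by
    simp [Complex.div_ofNat_re, Complex.add_re]
    linarith
  have hb : 0 < ((s - 2 * Complex.I * (r : ℂ)) / 2).re := by
    simp [Complex.div_ofNat_re, Complex.sub_re]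
    linarith
  have hbeta := Complex.Gamma_mul_Gamma_eq_betaIntegral ha hb
  rw [show (s + 2 * Complex.I * (r : ℂ)) / 2 + (s - 2 * Complex.I * (r : ℂ)) / 2 = s by ring]
    at hbeta
  rw [show Complex.Gamma s * (2 ^ (s - 1) * Complex.betaIntegral
        ((s + 2 * Complex.I * (r : ℂ)) / 2) ((s - 2 * Complex.I * (r : ℂ)) / 2))
      = 2 ^ (s - 1) * (Complex.Gamma ((s + 2 * Complex.I * (r : ℂ)) / 2)
          * Complex.Gamma ((s - 2 * Complex.I * (r : ℂ)) / 2)) by rw [hbeta]; ring]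
  ring
end
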